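/- Let (X,d,⪯) be an ordered metric space and E an O̅-complete subset of X. Let T, S be self-maps of X with T(X) ⊆ E ⊆ S(X) and T S-increasing. Suppose there exists a continuous half-comparison function ρ such that d(Tx,Ty) ≤ ρ(max{d(Sx,Sy), d(Sx,Tx), d(Sy,Ty), d(Sx,Ty), d(Sy,Tx)}) for all x, y ∈ X with Sx ⪯ Sy. Assume: there exists x₀ ∈ X with Sx₀ ⪯ Tx₀; T is (S,O̅)-continuous; (T,S) is weakly compatible; C(T,S) is totally ordered by ⪯; and at least one of T, S is a comparable mapping. Then (T,S) has a unique common fixed point, and for any such x₀ every T-S-sequence {Txₙ} with initial point x₀ converges to it. -/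

import Mathlib

open Filter Topology

/-- A comparison function: `φ : [0,∞) → [0,∞)` increasing with `φ^[n] t → 0` for all `t > 0`. -/
def IsComparisonFn (φ : ℝ → ℝ) : Prop :=
  (∀ t, 0 ≤ t → 0 ≤ φ t) ∧
  (∀ s t, 0 ≤ s → s ≤ t → φ s ≤ φ t) ∧
  (∀ t, 0 < t → Tendsto (fun n => φ^[n] t) atTop (𝓝 0))

/-- A half-comparison function: a comparison function `ρ` such that `t ↦ ρ (2 t)`
is also a comparison function. -/
def IsHalfComparisonFn (ρ : ℝ → ℝ) : Prop :=
  IsComparisonFn ρ ∧ IsComparisonFn (fun t => ρ (2 * t))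

/-- Two elements are comparable in a preorder. -/
def CmpRel {X : Type*} [Preorder X] (a b : X) : Prop := a ≤ b ∨ b ≤ a

/-- `T` is `S`-increasing. -/
def SIncreasing {X : Type*} [Preorder X] (T S : X → X) : Prop :=
  ∀ x y, S x ≤ S y → T x ≤ T y

/-- `E` is `O̅`-complete: every increasing Cauchy sequence in `E` converges in `E`. -/
def OBarComplete {X : Type*} [MetricSpace X] [Preorder X] (E : Set X) : Prop :=
  ∀ u : ℕ → X, (∀ n, u n ∈ E) → Monotone u → CauchySeq u → ∃ z ∈ E, Tendsto u atTop (𝓝 z)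

/-- `(E,d,⪯)` is I-regular relative to `S`: every increasing sequence `{S xₙ}` in `E`
converging to some `S z` admits a subsequence whose terms are all comparable with `S z`,
and moreover `S z ⪯ S (S z)`. -/
def IRegularOn {X : Type*} [MetricSpace X] [Preorder X] (E : Set X) (S : X → X) : Prop :=
  ∀ (x : ℕ → X) (z : X), (∀ n, S (x n) ∈ E) → Monotone (fun n => S (x n)) →
    Tendsto (fun n => S (x n)) atTop (𝓝 (S z)) →
    ((∃ k : ℕ → ℕ, StrictMono k ∧ ∀ n, CmpRel (S (x (k n))) (S z)) ∧ S z ≤ S (S z))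

/-- The pair `(T,S)` is weakly compatible. -/
def WeaklyCompatible {X : Type*} (T S : X → X) : Prop :=
  ∀ x, S x = T x → S (T x) = T (S x)

/-- The set of coincidence points `C(T,S)` is `(T,S)`-directed. -/
def CoincTSDirected {X : Type*} [Preorder X] (T S : X → X) : Prop :=
  ∀ x y, S x = T x → S y = T y → ∃ z, CmpRel (T x) (S z) ∧ CmpRel (T y) (S z)

/-- The set of coincidence points `C(T,S)` is totally ordered by `⪯`. -/
def CoincTotallyOrdered {X : Type*} [Preorder X] (T S : X → X) : Prop :=
  ∀ x y, S x = T x → S y = T y → CmpRel x y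

/-- `T` is `(S,O̅)`-continuous. -/
def SOBarContinuous {X : Type*} [MetricSpace X] [Preorder X] (T S : X → X) : Prop :=
  ∀ (x : ℕ → X) (a : X), Monotone (fun n => S (x n)) →
    Tendsto (fun n => S (x n)) atTop (𝓝 (S a)) →
    Tendsto (fun n => T (x n)) atTop (𝓝 (T a))

/-- A self-map `f` is `O̅`-continuous. -/
def OBarContinuous {X : Type*} [MetricSpace X] [Preorder X] (f : X → X) : Prop :=
  ∀ (x : ℕ → X) (a : X), Monotone x → Tendsto x atTop (𝓝 a) →
    Tendsto (fun n => f (x n)) atTop (𝓝 (f a))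

/-- The pair `(T,S)` is `O̅`-compatible. -/
def OBarCompatible {X : Type*} [MetricSpace X] [Preorder X] (T S : X → X) : Prop :=
  ∀ (x : ℕ → X) (z : X), Monotone (fun n => S (x n)) → Monotone (fun n => T (x n)) →
    Tendsto (fun n => S (x n)) atTop (𝓝 z) → Tendsto (fun n => T (x n)) atTop (𝓝 z) →
    Tendsto (fun n => dist (S (T (x n))) (T (S (x n)))) atTop (𝓝 0)

/-- A comparable mapping maps comparable elements to comparable elements. -/
def ComparableMap {X : Type*} [Preorder X] (f : X → X) : Prop :=
  ∀ x y, CmpRel x y → CmpRel (f x) (f y)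

/-- Continuity of a 6-variable function on `[0,∞)⁶`. -/
def ContOnNonneg6 (F : ℝ → ℝ → ℝ → ℝ → ℝ → ℝ → ℝ) : Prop :=
  ContinuousOn
    (fun p : ℝ × ℝ × ℝ × ℝ × ℝ × ℝ => F p.1 p.2.1 p.2.2.1 p.2.2.2.1 p.2.2.2.2.1 p.2.2.2.2.2)
    (Set.Ici 0 ×ˢ Set.Ici 0 ×ˢ Set.Ici 0 ×ˢ Set.Ici 0 ×ˢ Set.Ici 0 ×ˢ Set.Ici 0)

/-- Condition (F1a): `F` is decreasing in the fifth variable and there is a comparison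
function `φ` such that `F(u,v,v,u,u+v,0) ≤ 0` implies `u ≤ φ v` for `u, v ≥ 0`. -/
def CondF1a (F : ℝ → ℝ → ℝ → ℝ → ℝ → ℝ → ℝ) : Prop :=
  (∀ t1 t2 t3 t4 t6, 0 ≤ t1 → 0 ≤ t2 → 0 ≤ t3 → 0 ≤ t4 → 0 ≤ t6 →
      AntitoneOn (fun t5 => F t1 t2 t3 t4 t5 t6) (Set.Ici 0)) ∧
  (∃ φ, IsComparisonFn φ ∧ ∀ u v, 0 ≤ u → 0 ≤ v → F u v v u (u + v) 0 ≤ 0 → u ≤ φ v)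

/-- Condition (F1b): `F` is decreasing in the fourth variable and there is a comparison
function `φ` such that `F(u,v,0,u+v,u,v) ≤ 0` implies `u ≤ φ v` for `u, v ≥ 0`. -/
def CondF1b (F : ℝ → ℝ → ℝ → ℝ → ℝ → ℝ → ℝ) : Prop :=
  (∀ t1 t2 t3 t5 t6, 0 ≤ t1 → 0 ≤ t2 → 0 ≤ t3 → 0 ≤ t5 → 0 ≤ t6 →
      AntitoneOn (fun t4 => F t1 t2 t3 t4 t5 t6) (Set.Ici 0)) ∧
  (∃ φ, IsComparisonFn φ ∧ ∀ u v, 0 ≤ u → 0 ≤ v → F u v 0 (u + v) u v ≤ 0 → u ≤ φ v)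

/-- Condition (F1c): `F` is decreasing in the third variable and there is a comparison
function `φ` such that `F(u,v,u+v,0,v,u) ≤ 0` implies `u ≤ φ v` for `u, v ≥ 0`. -/
def CondF1c (F : ℝ → ℝ → ℝ → ℝ → ℝ → ℝ → ℝ) : Prop :=
  (∀ t1 t2 t4 t5 t6, 0 ≤ t1 → 0 ≤ t2 → 0 ≤ t4 → 0 ≤ t5 → 0 ≤ t6 →
      AntitoneOn (fun t3 => F t1 t2 t3 t4 t5 t6) (Set.Ici 0)) ∧
  (∃ φ, IsComparisonFn φ ∧ ∀ u v, 0 ≤ u → 0 ≤ v → F u v (u + v) 0 v u ≤ 0 → u ≤ φ v)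

/-- Condition (F2): `F(u,u,0,0,u,u) > 0` for all `u > 0`. -/
def CondF2 (F : ℝ → ℝ → ℝ → ℝ → ℝ → ℝ → ℝ) : Prop :=
  ∀ u, 0 < u → 0 < F u u 0 0 u u

/-!
The `T`-`S`-sequence `yₙ = T xₙ` started at `S x₀ ⪯ T x₀` is increasing, so the contractive
condition applies to every pair of its terms. Comparing consecutive terms gives
`d(yₙ₊₁, yₙ₊₂) ≤ ρ(2 d(yₙ, yₙ₊₁))`, so consecutive distances tend to `0` because `t ↦ ρ(2t)` is a
comparison function; continuity of `ρ` at `ε` and `ρ(ε) < ε` then keep every later term within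
`ε` of a sufficiently late one. The limit is `S u` for some `u`, and `(S,O̅)`-continuity makes `u`
a coincidence point. For coincidence points with comparable `S`-images the contractive condition
degenerates to `d(Ta, Tb) ≤ ρ(d(Ta, Tb))`, forcing `Ta = Tb`; with weak compatibility this makes
`Tu` a common fixed point, and the total order on `C(T,S)` makes it unique.
-/

namespace IsComparisonFn

variable {φ : ℝ → ℝ}

theorem tendsto_zero_of_le_apply (hφ : IsComparisonFn φ) {u : ℕ → ℝ} (hu0 : ∀ n, 0 ≤ u n)
    (hu : ∀ n, u (n + 1) ≤ φ (u n)) : Tendsto u atTop (𝓝 0) := by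
  have hiter : ∀ n, u n ≤ φ^[n] (u 0 + 1) := by
    intro n
    induction n with
    | zero => simp
    | succ n ih =>
      rw [Function.iterate_succ_apply']
      exact (hu n).trans (hφ.2.1 _ _ (hu0 n) ih)
  exact squeeze_zero hu0 hiter (hφ.2.2 _ (by linarith [hu0 0]))

theorem eq_zero_of_le_apply (hφ : IsComparisonFn φ) {t : ℝ} (ht : 0 ≤ t) (h : t ≤ φ t) :
    t = 0 :=
  tendsto_const_nhds_iff.1 (hφ.tendsto_zero_of_le_apply (fun _ => ht) fun _ => h)

theorem apply_lt_self (hφ : IsComparisonFn φ) {t : ℝ} (ht : 0 < t) : φ t < t := by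
  by_contra! h
  exact ht.ne' (hφ.eq_zero_of_le_apply ht.le h)

end IsComparisonFn

theorem IsHalfComparisonFn.le_apply_two_mul {ρ : ℝ → ℝ} (hρ : IsHalfComparisonFn ρ) {a b : ℝ}
    (ha : 0 ≤ a) (hb : 0 ≤ b) (h : b ≤ ρ (2 * max a b)) : b ≤ ρ (2 * a) := by
  rcases le_total b a with hba | hab
  · rwa [max_eq_left hba] at h
  · rw [max_eq_right hab] at h
    rw [hρ.2.eq_zero_of_le_apply hb h]
    exact hρ.1.1 _ (by linarith)

theorem exists_pos_apply_add_add_lt {f : ℝ → ℝ} {ε : ℝ} (hf : ContinuousAt f ε) (h : f ε < ε) :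
    ∃ η > 0, f (ε + η) + η < ε := by
  have hlim : Tendsto (fun η => f (ε + η) + η) (𝓝[>] 0) (𝓝 (f ε + 0)) := by
    refine (Tendsto.add ?_ tendsto_id).mono_left nhdsWithin_le_nhds
    exact hf.tendsto.comp (by simpa using (continuous_const_add ε).tendsto 0)
  rw [add_zero] at hlim
  obtain ⟨η, hη, hpos⟩ := ((hlim.eventually (gt_mem_nhds h)).and self_mem_nhdsWithin).exists
  exact ⟨η, hpos, hη⟩

section QuasiContraction

variable {α : Type*}

/-- For `p = Sx`, `q = Sy`, `p' = Tx`, `q' = Ty`, the maximum in the quasi-contraction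
condition. -/
def quasiDist [PseudoMetricSpace α] (p q p' q' : α) : ℝ :=
  max (dist p q) (max (dist p p') (max (dist q q') (max (dist p q') (dist q p'))))

theorem quasiDist_le [PseudoMetricSpace α] (p q p' q' : α) :
    quasiDist p q p' q' ≤ dist p q + max (dist p p') (dist q q') := by
  have h₁ := dist_triangle p q q'
  have h₂ := dist_triangle_left q p' p
  have := le_max_left (dist p p') (dist q q')
  have := le_max_right (dist p p') (dist q q')
  unfold quasiDist
  refine max_le ?_ (max_le ?_ (max_le ?_ (max_le ?_ ?_))) <;>
    linarith [dist_nonneg (x := p) (y := q), dist_nonneg (x := p) (y := p')]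

theorem quasiDist_self_self [MetricSpace α] (p q : α) : quasiDist p q p q = dist p q := by
  simp [quasiDist, dist_comm q p]

theorem tendsto_dist_succ_of_quasiContraction [PseudoMetricSpace α] {ρ : ℝ → ℝ}
    (hρ : IsHalfComparisonFn ρ) {y : ℕ → α}
    (hy : ∀ n, dist (y (n + 1)) (y (n + 2)) ≤
      ρ (quasiDist (y n) (y (n + 1)) (y (n + 1)) (y (n + 2)))) :
    Tendsto (fun n => dist (y n) (y (n + 1))) atTop (𝓝 0) := by
  refine hρ.2.tendsto_zero_of_le_apply (fun _ => dist_nonneg) fun n => ?_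
  refine hρ.le_apply_two_mul dist_nonneg dist_nonneg ((hy n).trans (hρ.1.2.1 _ _ ?_ ?_))
  · exact le_max_of_le_left dist_nonneg
  · have := quasiDist_le (y n) (y (n + 1)) (y (n + 1)) (y (n + 2))
    linarith [le_max_left (dist (y n) (y (n + 1))) (dist (y (n + 1)) (y (n + 2)))]

theorem cauchySeq_of_quasiContraction [PseudoMetricSpace α] {ρ : ℝ → ℝ}
    (hρ : IsHalfComparisonFn ρ) (hρc : ContinuousOn ρ (Set.Ici 0)) {y : ℕ → α}
    (hy : ∀ i j, i ≤ j →
      dist (y (i + 1)) (y (j + 1)) ≤ ρ (quasiDist (y i) (y j) (y (i + 1)) (y (j + 1)))) :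
    CauchySeq y := by
  have hd := tendsto_dist_succ_of_quasiContraction hρ fun n => hy n (n + 1) n.le_succ
  refine Metric.cauchySeq_iff'.2 fun ε hε => ?_
  obtain ⟨η, hη, hρη⟩ :=
    exists_pos_apply_add_add_lt (hρc.continuousAt (Ici_mem_nhds hε)) (hρ.1.apply_lt_self hε)
  obtain ⟨K, hK⟩ := eventually_atTop.1 (hd.eventually (gt_mem_nhds (half_pos hη)))
  refine ⟨K, fun m hm => ?_⟩
  -- The margin `η` keeps `d(y_K, y_m) < ε` from `m` to `m + 1`.
  induction m, hm using Nat.le_induction with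
  | base => simpa using hε
  | succ m hKm ih =>
    have hM : quasiDist (y K) (y m) (y (K + 1)) (y (m + 1)) ≤ ε + η := by
      have := quasiDist_le (y K) (y m) (y (K + 1)) (y (m + 1))
      have := max_lt (hK K le_rfl) (hK m hKm)
      rw [dist_comm] at ih
      linarith
    have hstep := (hy K m hKm).trans (hρ.1.2.1 _ _ (le_max_of_le_left dist_nonneg) hM)
    rw [dist_comm]
    linarith [dist_triangle (y K) (y (K + 1)) (y (m + 1)), hK K le_rfl]

end QuasiContraction

theorem exists_seq_apply_succ_eq {X : Type*} {T S : X → X} (h : Set.range T ⊆ Set.range S)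
    (x₀ : X) : ∃ x : ℕ → X, x 0 = x₀ ∧ ∀ n, S (x (n + 1)) = T (x n) := by
  choose f hf using fun a => h (Set.mem_range_self a)
  exact ⟨fun n => f^[n] x₀, rfl, fun n => by simp only [Function.iterate_succ_apply', hf]⟩

theorem SIncreasing.monotone_of_seq {X : Type*} [Preorder X] {T S : X → X}
    (hTS : SIncreasing T S) {x : ℕ → X} (h0 : S (x 0) ≤ T (x 0))
    (hx : ∀ n, S (x (n + 1)) = T (x n)) : Monotone fun n => S (x n) := by
  refine monotone_nat_of_le_succ fun n => ?_
  induction n with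
  | zero => exact h0.trans_eq (hx 0).symm
  | succ n ih => rw [hx, hx]; exact hTS _ _ ih

section OrderedQuasiContraction

variable {X : Type*} [MetricSpace X] [Preorder X] {T S : X → X} {ρ : ℝ → ℝ}

def IsOrderedQuasiContraction (T S : X → X) (ρ : ℝ → ℝ) : Prop :=
  ∀ x y, S x ≤ S y → dist (T x) (T y) ≤ ρ (quasiDist (S x) (S y) (T x) (T y))

namespace IsOrderedQuasiContraction

theorem exists_coincidence_tendsto (hcontr : IsOrderedQuasiContraction T S ρ)
    (hρ : IsHalfComparisonFn ρ) (hρc : ContinuousOn ρ (Set.Ici 0)) {E : Set X}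
    (hTE : ∀ x, T x ∈ E) (hES : E ⊆ Set.range S) (hE : OBarComplete E)
    (hTS : SIncreasing T S) (hScont : SOBarContinuous T S) {x : ℕ → X}
    (h0 : S (x 0) ≤ T (x 0)) (hx : ∀ n, S (x (n + 1)) = T (x n)) :
    ∃ u, S u = T u ∧ Tendsto (fun n => T (x n)) atTop (𝓝 (T u)) := by
  have hSx := hTS.monotone_of_seq h0 hx
  have hy : CauchySeq fun n => T (x n) := cauchySeq_of_quasiContraction hρ hρc fun i j hij => by
    simpa only [hx] using hcontr _ _ (hSx (Nat.succ_le_succ hij))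
  obtain ⟨z, hzE, hz⟩ := hE _ (fun n => hTE _) (fun i j hij => hTS _ _ (hSx hij)) hy
  obtain ⟨u, rfl⟩ := hES hzE
  have hTu := hScont (fun n => x (n + 1)) u (fun i j hij => hSx (Nat.succ_le_succ hij))
    (by simpa only [hx] using hz)
  have hu : T u = S u := tendsto_nhds_unique hTu (hz.comp (tendsto_add_atTop_nat 1))
  exact ⟨u, hu.symm, hu ▸ hz⟩

theorem apply_eq_of_cmpRel (hcontr : IsOrderedQuasiContraction T S ρ) (hρ : IsComparisonFn ρ)
    {a b : X} (ha : S a = T a) (hb : S b = T b) (hab : CmpRel (S a) (S b)) : T a = T b := by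
  have key : ∀ a b, S a = T a → S b = T b → S a ≤ S b → T a = T b := fun a b ha hb hab => by
    have h := hcontr a b hab
    rw [ha, hb, quasiDist_self_self] at h
    exact dist_eq_zero.1 (hρ.eq_zero_of_le_apply dist_nonneg h)
  rcases hab with hab | hba
  · exact key a b ha hb hab
  · exact (key b a hb ha hba).symm

theorem commonFixedPt_apply_of_coincidence (hcontr : IsOrderedQuasiContraction T S ρ)
    (hρ : IsComparisonFn ρ) (hwc : WeaklyCompatible T S) (htot : CoincTotallyOrdered T S)
    (hcmp : ComparableMap T ∨ ComparableMap S) {u : X} (hu : S u = T u) :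
    S (T u) = T u ∧ T (T u) = T u := by
  have hv : S (T u) = T (T u) := by simpa only [hu] using hwc u hu
  have huv : CmpRel (S u) (S (T u)) := by
    rcases hcmp with hT | hS
    · rw [hu, hv]; exact hT _ _ (htot u (T u) hu hv)
    · exact hS _ _ (htot u (T u) hu hv)
  have h := hcontr.apply_eq_of_cmpRel hρ hu hv huv
  exact ⟨hv.trans h.symm, h.symm⟩

theorem eq_of_commonFixedPt (hcontr : IsOrderedQuasiContraction T S ρ) (hρ : IsComparisonFn ρ)
    (htot : CoincTotallyOrdered T S) {a b : X} (ha₁ : S a = a) (ha₂ : T a = a)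
    (hb₁ : S b = b) (hb₂ : T b = b) : a = b := by
  have hab : CmpRel (S a) (S b) := by
    rw [ha₁, hb₁]; exact htot a b (ha₁.trans ha₂.symm) (hb₁.trans hb₂.symm)
  rw [← ha₂, ← hb₂]
  exact hcontr.apply_eq_of_cmpRel hρ (ha₁.trans ha₂.symm) (hb₁.trans hb₂.symm) hab

end IsOrderedQuasiContraction

end OrderedQuasiContraction

/-- order-theoretic quasi-contraction corollary, `(S,O̅)`-continuity case
(Corollary 3.9, second alternative). -/
theorem quasicontraction_ordered_SOBar {X : Type*} [MetricSpace X] [PartialOrder X]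
    (E : Set X) (T S : X → X)
    (hTE : ∀ x, T x ∈ E) (hES : E ⊆ Set.range S) (hTS : SIncreasing T S)
    (ρ : ℝ → ℝ) (hρ : IsHalfComparisonFn ρ) (hρc : ContinuousOn ρ (Set.Ici 0))
    (hcontr : ∀ x y, S x ≤ S y →
      dist (T x) (T y) ≤
        ρ (max (dist (S x) (S y)) (max (dist (S x) (T x)) (max (dist (S y) (T y))
            (max (dist (S x) (T y)) (dist (S y) (T x)))))))
    (hx0 : ∃ x₀, S x₀ ≤ T x₀)
    (hE : OBarComplete E)
    (hScont : SOBarContinuous T S)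
    (hwc : WeaklyCompatible T S)
    (htot : CoincTotallyOrdered T S)
    (hcmp : ComparableMap T ∨ ComparableMap S) :
    ∃ z, S z = z ∧ T z = z ∧ (∀ w, S w = w → T w = w → w = z) ∧
      ∀ x : ℕ → X, S (x 0) ≤ T (x 0) → (∀ n, S (x (n + 1)) = T (x n)) →
        Tendsto (fun n => T (x n)) atTop (𝓝 z) := by
  have hQ : IsOrderedQuasiContraction T S ρ := hcontr
  obtain ⟨x₀, hx₀⟩ := hx0
  obtain ⟨x, rfl, hx⟩ :=
    exists_seq_apply_succ_eq (T := T) (Set.range_subset_iff.2 fun a => hES (hTE a)) x₀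
  obtain ⟨u, hu, -⟩ := hQ.exists_coincidence_tendsto hρ hρc hTE hES hE hTS hScont hx₀ hx
  obtain ⟨hSz, hTz⟩ := hQ.commonFixedPt_apply_of_coincidence hρ.1 hwc htot hcmp hu
  have huniq : ∀ w, S w = w → T w = w → w = T u := fun w hw₁ hw₂ =>
    hQ.eq_of_commonFixedPt hρ.1 htot hw₁ hw₂ hSz hTz
  refine ⟨T u, hSz, hTz, huniq, fun x' h0 hx' => ?_⟩
  obtain ⟨u', hu', hlim⟩ := hQ.exists_coincidence_tendsto hρ hρc hTE hES hE hTS hScont h0 hx'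
  obtain ⟨hSz', hTz'⟩ := hQ.commonFixedPt_apply_of_coincidence hρ.1 hwc htot hcmp hu'
  rwa [huniq _ hSz' hTz'] at hlim
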